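/- The map sending a prime ideal P of A to P'^f := {(p, f(p)+j) : p ∈ P, j ∈ J} is a closed topological embedding of Spec(A) into Spec(A⋈^f J) (with respect to the Zariski topologies), whose image equals V(J₀), where J₀ := {0} × J. -/

import Mathlib

section Amalgamation

variable {A B : Type*} [CommRing A] [CommRing B]

/-- The amalgamation `A ⋈^f J` of `A` with `B` along the ideal `J` of `B` with respect to
the ring homomorphism `f : A → B`, realized as the subring
`{(a, f a + j) | a ∈ A, j ∈ J}` of `A × B`. -/
def amalg (f : A →+* B) (J : Ideal B) : Subring (A × B) where
  carrier := {x : A × B | x.2 - f x.1 ∈ J}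
  zero_mem' := by simp
  one_mem' := by simp
  add_mem' := by
    intro x y hx hy
    simp only [Set.mem_setOf_eq, Prod.fst_add, Prod.snd_add, map_add] at *
    have h : x.2 + y.2 - (f x.1 + f y.1) = x.2 - f x.1 + (y.2 - f y.1) := by ring
    rw [h]; exact J.add_mem hx hy
  neg_mem' := by
    intro x hx
    simp only [Set.mem_setOf_eq, Prod.fst_neg, Prod.snd_neg, map_neg] at *
    have h : -x.2 - -f x.1 = -(x.2 - f x.1) := by ring
    rw [h]; exact J.neg_mem hx
  mul_mem' := by
    intro x y hx hy
    simp only [Set.mem_setOf_eq, Prod.fst_mul, Prod.snd_mul, map_mul] at *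
    have h : x.2 * y.2 - f x.1 * f y.1 = x.2 * (y.2 - f y.1) + (x.2 - f x.1) * f y.1 := by ring
    rw [h]
    exact J.add_mem (J.mul_mem_left _ hy) (J.mul_mem_right _ hx)

lemma mem_amalg_iff (f : A →+* B) (J : Ideal B) (x : A × B) :
    x ∈ amalg f J ↔ x.2 - f x.1 ∈ J := Iff.rfl

/-- The natural projection `p_A : A ⋈^f J → A`. -/
def pA (f : A →+* B) (J : Ideal B) : amalg f J →+* A :=
  (RingHom.fst A B).comp (amalg f J).subtype

/-- The natural projection `p_B : A ⋈^f J → B`. -/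
def pB (f : A →+* B) (J : Ideal B) : amalg f J →+* B :=
  (RingHom.snd A B).comp (amalg f J).subtype

/-- For an ideal `P` of `A`, the ideal `P'^f = P ⋈^f J = {(p, f p + j) | p ∈ P, j ∈ J}`
of `A ⋈^f J`. -/
def idealPf (f : A →+* B) (J : Ideal B) (P : Ideal A) : Ideal (amalg f J) :=
  Submodule.copy (Ideal.comap (pA f J) P)
    {x : amalg f J | ∃ p ∈ P, ∃ j ∈ J, (x : A × B) = (p, f p + j)}
    (by
      ext x
      simp only [Set.mem_setOf_eq, SetLike.mem_coe, Ideal.mem_comap]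
      constructor
      · rintro ⟨p, hp, j, hj, hx⟩
        have h1 : pA f J x = p := by
          show (x : A × B).1 = p
          rw [hx]
        rw [h1]; exact hp
      · intro hx
        refine ⟨(x : A × B).1, hx, (x : A × B).2 - f (x : A × B).1,
          (mem_amalg_iff f J _).mp x.2, ?_⟩
        ext <;> simp)

/-- The ideal `J₀ = {0} × J` of `A ⋈^f J`. -/
def J0 (f : A →+* B) (J : Ideal B) : Ideal (amalg f J) :=
  Submodule.copy (RingHom.ker (pA f J))
    {x : amalg f J | (x : A × B).1 = 0 ∧ (x : A × B).2 ∈ J}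
    (by
      ext x
      simp only [Set.mem_setOf_eq, SetLike.mem_coe, RingHom.mem_ker]
      constructor
      · rintro ⟨h0, _⟩; exact h0
      · intro h0
        have h0' : (x : A × B).1 = 0 := h0
        refine ⟨h0', ?_⟩
        have h2 := (mem_amalg_iff f J _).mp x.2
        rw [h0', map_zero, sub_zero] at h2
        exact h2)

end Amalgamation

/-!
The projection `p_A : A ⋈^f J → A` is surjective with kernel `J₀`, and `P'^f = p_A⁻¹(P)`.
Hence `P ↦ P'^f` is `Spec p_A`, and the spectrum map of a surjection is a closed embedding
onto the zero locus of its kernel.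
-/

section Amalgamation

variable {A B : Type*} [CommRing A] [CommRing B] (f : A →+* B) (J : Ideal B)

lemma pA_surjective : Function.Surjective (pA f J) :=
  fun a => ⟨⟨(a, f a), by simp [mem_amalg_iff]⟩, rfl⟩

lemma idealPf_eq_comap (P : Ideal A) : idealPf f J P = P.comap (pA f J) :=
  Submodule.copy_eq _ _ _

lemma J0_eq_ker : J0 f J = RingHom.ker (pA f J) :=
  Submodule.copy_eq _ _ _

end Amalgamation

/-- The map `P ↦ P'^f` is a closed topological embedding of `Spec A` into
`Spec (A ⋈^f J)`, with image `V(J₀)`. -/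
theorem stmt6 {A B : Type*} [CommRing A] [CommRing B] (f : A →+* B) (J : Ideal B) :
    ∃ g : PrimeSpectrum A → PrimeSpectrum (amalg f J),
      (∀ p : PrimeSpectrum A, (g p).asIdeal = idealPf f J p.asIdeal) ∧
      Topology.IsClosedEmbedding g ∧
      Set.range g = {q : PrimeSpectrum (amalg f J) | J0 f J ≤ q.asIdeal} := by
  refine ⟨PrimeSpectrum.comap (pA f J), fun p => (idealPf_eq_comap f J p.asIdeal).symm,
    PrimeSpectrum.isClosedEmbedding_comap_of_surjective _ _ (pA_surjective f J), ?_⟩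
  rw [range_comap_of_surjective _ _ (pA_surjective f J), J0_eq_ker]
  rfl
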